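/- arXiv:1211.3783 — 6 statements merged into one kernel-verified Lean document; each statement's English description precedes it below -/
import Mathlib

section
/- (Van der Corput) Let a ≤ b be real numbers and F : [a,b] → ℝ a differentiable function whose derivative F′ is monotone on [a,b] and satisfies |F′(t)| ≥ 1 for all t in the open interval (a,b). Then |∫_a^b exp(i·F(t)) dt| ≤ 3. -/
/-!
Assume first `F' ≥ 1` on `(a,b)`, write `e^{iF} = (e^{iF} F') / F'` and expand
`1 / F'(t) = |{s ∈ (0,1) : F'(t) < 1/s}|`. By Fubini, `∫ e^{iF}` becomes an average over
`s ∈ (0,1)` of the integrals of `e^{iF} F' = (-i e^{iF})'` over the sublevel sets `{F' < 1/s}`.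
These are intervals because `F'` is monotone, so each of those integrals has modulus at most `2`.
By Darboux's theorem `F' ≥ 1` or `F' ≤ -1` throughout, and the second case is the complex
conjugate of the first applied to `-F`. This even gives the bound `2`.
-/

open Set intervalIntegral MeasureTheory Complex ComplexConjugate

theorem norm_setIntegral_inv_smul_le_of_forall_sublevel {α E : Type*} [MeasurableSpace α]
    [NormedAddCommGroup E] [NormedSpace ℝ E] [CompleteSpace E] {μ : Measure α} [SFinite μ]
    {S : Set α} {G : α → ℝ} {f : α → E} {C : ℝ} (hS : MeasurableSet S) (hG : Measurable G)
    (hG1 : ∀ t ∈ S, 1 ≤ G t) (hf : IntegrableOn f S μ)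
    (hC : ∀ s ∈ Ioo (0 : ℝ) 1, ‖∫ t in S ∩ {t | G t < s⁻¹}, f t ∂μ‖ ≤ C) :
    ‖∫ t in S, (G t)⁻¹ • f t ∂μ‖ ≤ C := by
  set A : Set (α × ℝ) := {p | G p.1 < p.2⁻¹}
  have hA : MeasurableSet A := measurableSet_lt (hG.comp measurable_fst) measurable_snd.inv
  set ψ : α × ℝ → E := A.indicator fun p => f p.1
  have hψ : Integrable (Function.uncurry fun t s => ψ (t, s))
      ((μ.restrict S).prod (volume.restrict (Ioo 0 1))) :=
    (Integrable.comp_fst hf _).indicator hA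
  have h_inner_s : ∀ t ∈ S, ∫ s in Ioo 0 1, ψ (t, s) = (G t)⁻¹ • f t := by
    intro t ht
    have hGpos : 0 < G t := zero_lt_one.trans_le (hG1 t ht)
    have hset : {s : ℝ | G t < s⁻¹} ∩ Ioo 0 1 = Ioo 0 (G t)⁻¹ := by
      ext s
      simp only [mem_inter_iff, mem_ofPred_eq, mem_Ioo]
      constructor
      · rintro ⟨h, hs, -⟩
        exact ⟨hs, (lt_inv_comm₀ hGpos hs).1 h⟩
      · rintro ⟨hs, h⟩
        exact ⟨(lt_inv_comm₀ hGpos hs).2 h, hs, h.trans_le (inv_le_one_of_one_le₀ (hG1 t ht))⟩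
    have hmeas : MeasurableSet {s : ℝ | G t < s⁻¹} :=
      measurableSet_lt measurable_const measurable_inv
    rw [show (fun s => ψ (t, s)) = {s : ℝ | G t < s⁻¹}.indicator fun _ => f t from rfl,
      MeasureTheory.integral_indicator hmeas, Measure.restrict_restrict hmeas, hset,
      setIntegral_const, Real.volume_real_Ioo_of_le (inv_pos.2 hGpos).le, sub_zero]
  have h_inner_t : ∀ s, ∫ t in S, ψ (t, s) ∂μ = ∫ t in S ∩ {t | G t < s⁻¹}, f t ∂μ := by
    intro s
    have hmeas : MeasurableSet {t | G t < s⁻¹} := measurableSet_lt hG measurable_const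
    rw [show (fun t => ψ (t, s)) = {t | G t < s⁻¹}.indicator f from rfl,
      MeasureTheory.integral_indicator hmeas, Measure.restrict_restrict hmeas, inter_comm]
  calc ‖∫ t in S, (G t)⁻¹ • f t ∂μ‖ = ‖∫ s in Ioo 0 1, ∫ t in S, ψ (t, s) ∂μ‖ := by
        rw [← integral_integral_swap hψ, setIntegral_congr_fun hS h_inner_s]
    _ ≤ C * volume.real (Ioo (0 : ℝ) 1) := by
        refine norm_setIntegral_le_of_norm_le_const measure_Ioo_lt_top fun s hs => ?_
        rw [h_inner_t]
        exact hC s hs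
    _ = C := by simp

theorem norm_intervalIntegral_exp_mul_deriv_le_two {F F' : ℝ → ℝ} {c d : ℝ}
    (hderiv : ∀ t ∈ uIcc c d, HasDerivAt F (F' t) t) (hint : IntervalIntegrable F' volume c d) :
    ‖∫ t in c..d, exp (I * F t) * F' t‖ ≤ 2 := by
  have hprim : ∀ t ∈ uIcc c d,
      HasDerivAt (fun t => -I * exp (I * F t)) (exp (I * F t) * F' t) t := by
    intro t ht
    exact (((hderiv t ht).ofReal_comp.const_mul I).cexp.const_mul (-I)).congr_deriv
      (by linear_combination (-(exp (I * F t) * F' t)) * I_mul_I)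
  have hcont : ContinuousOn (fun t => exp (I * F t)) (uIcc c d) :=
    continuous_exp.comp_continuousOn (continuousOn_const.mul (continuous_ofReal.comp_continuousOn
      fun t ht => (hderiv t ht).continuousAt.continuousWithinAt))
  have hint' : IntervalIntegrable (fun t => (F' t : ℂ)) volume c d :=
    ⟨hint.1.ofReal, hint.2.ofReal⟩
  rw [integral_eq_sub_of_hasDerivAt hprim (hint'.continuousOn_mul hcont)]
  calc _ ≤ ‖-I * exp (I * F d)‖ + ‖-I * exp (I * F c)‖ := norm_sub_le _ _
    _ = 2 := by simp only [norm_mul, norm_neg, norm_I, norm_exp_I_mul_ofReal]; norm_num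

theorem Set.OrdConnected.ae_eq_Ioo_csInf_csSup {s : Set ℝ} (hs : s.OrdConnected)
    (hne : s.Nonempty) (hb : BddBelow s) (ha : BddAbove s) :
    s =ᵐ[volume] Ioo (sInf s) (sSup s) :=
  (((subset_Icc_csInf_csSup hb ha).eventuallyLE).trans Ioo_ae_eq_Icc.symm.le).antisymm
    ((show IsConnected s from ⟨hne, hs.isPreconnected⟩).Ioo_csInf_csSup_subset hb ha).eventuallyLE

theorem norm_setIntegral_exp_mul_deriv_le_two {F F' : ℝ → ℝ} {a b : ℝ} {T : Set ℝ}
    (hT : T.OrdConnected) (hTab : T ⊆ Icc a b) (hderiv : ∀ t ∈ Icc a b, HasDerivAt F (F' t) t)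
    (hint : IntegrableOn F' (Icc a b)) :
    ‖∫ t in T, exp (I * F t) * F' t‖ ≤ 2 := by
  rcases T.eq_empty_or_nonempty with rfl | hne
  · simp
  have hb : BddBelow T := bddBelow_Icc.mono hTab
  have ha : BddAbove T := bddAbove_Icc.mono hTab
  obtain ⟨t, ht⟩ := hne
  have hcd : sInf T ≤ sSup T := (csInf_le hb ht).trans (le_csSup ha ht)
  have hsub : Icc (sInf T) (sSup T) ⊆ Icc a b :=
    Icc_subset_Icc (le_csInf ⟨t, ht⟩ fun x hx => (hTab hx).1)
      (csSup_le ⟨t, ht⟩ fun x hx => (hTab hx).2)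
  rw [setIntegral_congr_set (hT.ae_eq_Ioo_csInf_csSup ⟨t, ht⟩ hb ha),
    ← integral_Ioc_eq_integral_Ioo, ← integral_of_le hcd]
  refine norm_intervalIntegral_exp_mul_deriv_le_two (fun x hx => hderiv x (hsub ?_)) ?_
  · rwa [uIcc_of_le hcd] at hx
  · exact (intervalIntegrable_iff_integrableOn_Icc_of_le hcd).2 (hint.mono_set hsub)

theorem norm_integral_exp_le_two_of_one_le_deriv {F F' : ℝ → ℝ} {a b : ℝ} (hab : a ≤ b)
    (hderiv : ∀ t ∈ Icc a b, HasDerivAt F (F' t) t)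
    (hmono : MonotoneOn F' (Icc a b) ∨ AntitoneOn F' (Icc a b))
    (hpos : ∀ t ∈ Ioo a b, 1 ≤ F' t) :
    ‖∫ t in a..b, exp (I * F t)‖ ≤ 2 := by
  -- a monotone extension of `F'|[a,b]` to `ℝ`: measurable, with intervals as sublevel sets
  set G : ℝ → ℝ := fun t => F' (projIcc a b hab t)
  have hGF' : ∀ t ∈ Ioo a b, G t = F' t := fun t ht => by
    simp only [G, projIcc_of_mem hab (Ioo_subset_Icc_self ht)]
  have hG : Monotone G ∨ Antitone G := hmono.imp
    (fun h _ _ hxy => h (projIcc a b hab _).2 (projIcc a b hab _).2 (monotone_projIcc hab hxy))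
    (fun h _ _ hxy => h (projIcc a b hab _).2 (projIcc a b hab _).2 (monotone_projIcc hab hxy))
  have hint : IntegrableOn F' (Icc a b) :=
    hmono.elim (·.integrableOn_isCompact isCompact_Icc) (·.integrableOn_isCompact isCompact_Icc)
  have hcont : ContinuousOn (fun t => exp (I * F t)) (Icc a b) :=
    continuous_exp.comp_continuousOn (continuousOn_const.mul (continuous_ofReal.comp_continuousOn
      fun t ht => (hderiv t ht).continuousAt.continuousWithinAt))
  have h_eq : ∫ t in a..b, exp (I * F t) = ∫ t in Ioo a b, (G t)⁻¹ • (exp (I * F t) * F' t) := by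
    rw [integral_of_le hab, integral_Ioc_eq_integral_Ioo]
    refine setIntegral_congr_fun measurableSet_Ioo fun t ht => ?_
    have hF' : (F' t : ℂ) ≠ 0 := ofReal_ne_zero.2 (zero_lt_one.trans_le (hpos t ht)).ne'
    rw [hGF' t ht, real_smul, ofReal_inv]
    field_simp
  rw [h_eq]
  refine norm_setIntegral_inv_smul_le_of_forall_sublevel measurableSet_Ioo
    (hG.elim Monotone.measurable Antitone.measurable) (fun t ht => hGF' t ht ▸ hpos t ht)
    ((IntegrableOn.continuousOn_mul hcont hint.ofReal isCompact_Icc).mono_set Ioo_subset_Icc_self)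
    fun s _ => norm_setIntegral_exp_mul_deriv_le_two ?_
      (inter_subset_left.trans Ioo_subset_Icc_self) hderiv hint
  exact ordConnected_Ioo.inter
    (hG.elim ordConnected_Iio.preimage_mono ordConnected_Iio.preimage_anti)

theorem forall_one_le_or_forall_le_neg_one_of_one_le_abs_deriv {F F' : ℝ → ℝ} {s : Set ℝ}
    (hs : Convex ℝ s) (hderiv : ∀ t ∈ s, HasDerivWithinAt F (F' t) s t)
    (hbig : ∀ t ∈ s, 1 ≤ |F' t|) : (∀ t ∈ s, 1 ≤ F' t) ∨ ∀ t ∈ s, F' t ≤ -1 := by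
  have hne : ∀ t ∈ s, F' t ≠ 0 := fun t ht h => absurd (hbig t ht) (by simp [h])
  refine (hasDerivWithinAt_forall_lt_or_forall_gt_of_forall_ne hs hderiv hne).symm.imp
    (fun h t ht => ?_) (fun h t ht => ?_)
  · exact (hbig t ht).trans_eq (abs_of_pos (h t ht))
  · exact le_neg_of_le_neg ((hbig t ht).trans_eq (abs_of_neg (h t ht)))

theorem norm_integral_exp_le_two {F F' : ℝ → ℝ} {a b : ℝ} (hab : a ≤ b)
    (hderiv : ∀ t ∈ Icc a b, HasDerivAt F (F' t) t)
    (hmono : MonotoneOn F' (Icc a b) ∨ AntitoneOn F' (Icc a b))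
    (hbig : ∀ t ∈ Ioo a b, 1 ≤ |F' t|) :
    ‖∫ t in a..b, exp (I * F t)‖ ≤ 2 := by
  rcases forall_one_le_or_forall_le_neg_one_of_one_le_abs_deriv (convex_Ioo a b)
    (fun t ht => (hderiv t (Ioo_subset_Icc_self ht)).hasDerivWithinAt) hbig with hpos | hneg
  · exact norm_integral_exp_le_two_of_one_le_deriv hab hderiv hmono hpos
  have hconj : ∫ t in a..b, exp (I * (-F t : ℝ)) = conj (∫ t in a..b, exp (I * F t)) := by
    simp only [integral_of_le hab, ← integral_conj, ← exp_conj, map_mul, conj_I, conj_ofReal,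
      ofReal_neg, mul_neg, neg_mul]
  rw [← RCLike.norm_conj, ← hconj]
  exact norm_integral_exp_le_two_of_one_le_deriv hab (fun t ht => (hderiv t ht).neg)
    (hmono.symm.imp AntitoneOn.neg MonotoneOn.neg) fun t ht => le_neg_of_le_neg (hneg t ht)

/-- **Van der Corput's lemma.** If `F : [a,b] → ℝ` is differentiable, its derivative `F'`
is monotone (in either direction), and `|F'| ≥ 1` on `(a,b)`, then
`|∫_a^b exp(i F(t)) dt| ≤ 3`. -/
theorem van_der_corput
    (a b : ℝ) (hab : a ≤ b) (F F' : ℝ → ℝ)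
    (hderiv : ∀ t ∈ Icc a b, HasDerivAt F (F' t) t)
    (hmono : MonotoneOn F' (Icc a b) ∨ AntitoneOn F' (Icc a b))
    (hbig : ∀ t ∈ Ioo a b, 1 ≤ |F' t|) :
    ‖∫ t in a..b, Complex.exp (Complex.I * (F t : ℂ))‖ ≤ 3 :=
  (norm_integral_exp_le_two hab hderiv hmono hbig).trans (by norm_num)
end

section
/- Let Ω = ℤ ∪ 2πℤ ⊆ ℝ. For every nonzero real number a, the image of Ω under the quotient homomorphism ℝ → ℝ/aℤ is dense in the circle group ℝ/aℤ; consequently Ω has dense image in every compact quotient group of ℝ. -/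
/-!
The ratios `1 / a` and `2π / a` cannot both be rational, since their quotient `2π` is irrational.
If `b / a` is irrational, the multiples of `b` are dense in `ℝ/aℤ`, and all multiples of `1` and of
`2π` lie in `ℤ ∪ 2πℤ`. A subgroup `H` of `ℝ` with compact quotient is either `cℤ` with `c ≠ 0`,
which is the circle case, or dense, in which case every nonempty set has dense image in `ℝ ⧸ H`.
-/

open Real

theorem Irrational.irrational_one_div_or_div {x a : ℝ} (hx : Irrational x) (ha : a ≠ 0) :
    Irrational (1 / a) ∨ Irrational (x / a) := by
  refine or_iff_not_imp_left.2 fun h => ?_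
  obtain ⟨q, hq⟩ : 1 / a ∈ Set.range ((↑) : ℚ → ℝ) := not_not.1 h
  have hq0 : q ≠ 0 := by rintro rfl; simp [eq_comm, ha] at hq
  rw [div_eq_mul_one_div, ← hq]
  exact hx.mul_ratCast hq0

theorem irrational_two_mul_pi : Irrational (2 * π) := by
  simpa using irrational_pi.natCast_mul two_ne_zero

theorem AddCircle.dense_image_coe_of_zsmul_mem {a b : ℝ} {s : Set ℝ} (hb : Irrational (b / a))
    (hs : ∀ n : ℤ, n • b ∈ s) : Dense ((↑) '' s : Set (AddCircle a)) :=
  (denseRange_zsmul_coe_iff.2 hb).mono <| Set.range_subset_iff.2 fun n =>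
    ⟨n • b, hs n, QuotientAddGroup.mk_zsmul _ _ _⟩

theorem QuotientAddGroup.dense_image_mk_of_dense {G : Type*} [AddGroup G] [TopologicalSpace G]
    [IsTopologicalAddGroup G] {N : AddSubgroup G} (hN : Dense (N : Set G)) {s : Set G}
    (hs : s.Nonempty) : Dense ((↑) '' s : Set (G ⧸ N)) := by
  obtain ⟨x, hx⟩ := hs
  rw [dense_image_mk]
  exact (hN.vadd x).mono (Set.vadd_set_subset_add hx)

theorem QuotientAddGroup.not_compactSpace_quotient_bot {G : Type*} [AddGroup G]
    [TopologicalSpace G] [NoncompactSpace G] : ¬CompactSpace (G ⧸ (⊥ : AddSubgroup G)) := by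
  intro hcompact
  have hcont : Continuous (quotientBot : G ⧸ (⊥ : AddSubgroup G) → G) :=
    continuous_quot_lift _ continuous_id
  exact not_compactSpace_iff.2 ‹_› (quotientBot.surjective.compactSpace hcont)

theorem Real.dense_or_eq_zmultiples_of_compactSpace_quotient (H : AddSubgroup ℝ)
    [CompactSpace (ℝ ⧸ H)] : Dense (H : Set ℝ) ∨ ∃ c ≠ 0, H = AddSubgroup.zmultiples c := by
  refine (AddSubgroup.dense_or_cyclic H).imp_right fun ⟨c, hc⟩ => ⟨c, ?_, ?_⟩
  · rintro rfl
    rw [← AddSubgroup.zmultiples_eq_closure, AddSubgroup.zmultiples_zero_eq_bot] at hc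
    subst hc
    exact QuotientAddGroup.not_compactSpace_quotient_bot ‹_›
  · rw [hc, AddSubgroup.zmultiples_eq_closure]

/-- The set `Ω = ℤ ∪ 2πℤ` has dense image in the circle `ℝ/aℤ` for every nonzero real `a`;
consequently it has dense image in every compact quotient group of `ℝ`. -/
theorem int_union_two_pi_int_dense_in_quotients :
    (∀ a : ℝ, a ≠ 0 →
      Dense ((fun x : ℝ => (x : AddCircle a)) ''
        {x : ℝ | (∃ n : ℤ, x = n) ∨ ∃ n : ℤ, x = 2 * π * n})) ∧
    ∀ (H : AddSubgroup ℝ), CompactSpace (ℝ ⧸ H) →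
      Dense ((QuotientAddGroup.mk : ℝ → ℝ ⧸ H) ''
        {x : ℝ | (∃ n : ℤ, x = n) ∨ ∃ n : ℤ, x = 2 * π * n}) := by
  have circle (a : ℝ) (ha : a ≠ 0) : Dense ((fun x : ℝ => (x : AddCircle a)) ''
      {x : ℝ | (∃ n : ℤ, x = n) ∨ ∃ n : ℤ, x = 2 * π * n}) := by
    rcases irrational_two_mul_pi.irrational_one_div_or_div ha with h | h
    · exact AddCircle.dense_image_coe_of_zsmul_mem h fun n => Or.inl ⟨n, by simp⟩
    · exact AddCircle.dense_image_coe_of_zsmul_mem h fun n => Or.inr ⟨n, by simp [mul_comm]⟩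
  refine ⟨circle, fun H _ => ?_⟩
  rcases Real.dense_or_eq_zmultiples_of_compactSpace_quotient H with hH | ⟨c, hc, rfl⟩
  · exact QuotientAddGroup.dense_image_mk_of_dense hH ⟨0, Or.inl ⟨0, by simp⟩⟩
  · exact circle c hc
end

section
/- Let α : ℝ → 𝕋 × 𝕋 be the continuous homomorphism α(v) = (exp(iv), exp(2πiv)), where 𝕋 is the multiplicative group of complex numbers of modulus 1, and let Ω = ℤ ∪ 2πℤ ⊆ ℝ. Then the closure of α(Ω) in 𝕋 × 𝕋 equals (𝕋 × {1}) ∪ ({1} × 𝕋), while the closure of α(ℝ) is all of 𝕋 × 𝕋. In particular α(Ω) is not dense in the closure of α(ℝ), so Ω is not Bohr dense in ℝ even though it has dense image in every compact quotient group of ℝ. -/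
/-! On `ℤ` the second coordinate `e^{2πin}` of `α` is trivial and the first, `e^{in}`, is an
irrational rotation (`1 / 2π ∉ ℚ`), so `α(ℤ)` is dense in `𝕋 × {1}`; symmetrically `α(2πℤ)` is
dense in `{1} × 𝕋`, the rotation number being `2π`. The two axes generate the torus, so the
closure of the semigroup `α(ℝ)` is everything, while `α(π) = (-1, -1)` lies on neither axis. -/

open Real Set

theorem Circle.denseRange_exp_intCast_mul {a : ℝ} (ha : Irrational (a / (2 * π))) :
    DenseRange fun n : ℤ => Circle.exp (n * a) := by
  have h := AddCircle.homeomorphCircle'.surjective.denseRange.comp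
    (AddCircle.denseRange_zsmul_coe_iff.2 ha) AddCircle.homeomorphCircle'.continuous
  convert h using 2 with n
  simp [← AddCircle.homeomorphCircle'_apply_mk]

theorem DenseRange.closure_range_prodMk_const {ι X Y : Type*} [TopologicalSpace X]
    [TopologicalSpace Y] [T1Space Y] {f : ι → X} (hf : DenseRange f) (y : Y) :
    closure (range fun i => (f i, y)) = univ ×ˢ {y} := by
  have : (range fun i => (f i, y)) = range f ×ˢ {y} := by
    ext ⟨x, y'⟩; simp [and_comm, eq_comm]
  rw [this, closure_prod_eq, hf.closure_range, closure_singleton]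

theorem DenseRange.closure_range_const_prodMk {ι X Y : Type*} [TopologicalSpace X]
    [TopologicalSpace Y] [T1Space X] {f : ι → Y} (hf : DenseRange f) (x : X) :
    closure (range fun i => (x, f i)) = {x} ×ˢ univ := by
  have : (range fun i => (x, f i)) = {x} ×ˢ range f := by
    ext ⟨x', y⟩; simp [eq_comm]
  rw [this, closure_prod_eq, hf.closure_range, closure_singleton]

theorem denseRange_of_map_add_of_axes_subset_closure {G M N : Type*} [Add G] [MulOneClass M]
    [MulOneClass N] [TopologicalSpace M] [TopologicalSpace N] [ContinuousMul M] [ContinuousMul N]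
    {f : G → M × N} (hf : ∀ x y, f (x + y) = f x * f y)
    (h : univ ×ˢ {1} ∪ {1} ×ˢ univ ⊆ closure (range f)) : DenseRange f := by
  rintro ⟨a, b⟩
  have hab : (a, 1) * (1, b) ∈ closure (range f) :=
    map_mem_closure₂ continuous_mul (h (Or.inl ⟨trivial, rfl⟩)) (h (Or.inr ⟨rfl, trivial⟩))
      (by rintro _ ⟨x, rfl⟩ _ ⟨y, rfl⟩; exact ⟨x + y, hf x y⟩)
  simpa using hab

/-- For the irrational winding `α(v) = (e^{iv}, e^{2πiv})` of `ℝ` into the 2-torus and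
`Ω = ℤ ∪ 2πℤ`, the closure of `α(Ω)` is `(𝕋 × {1}) ∪ ({1} × 𝕋)` while the closure of
`α(ℝ)` is all of `𝕋 × 𝕋`; in particular `α(Ω)` is not dense in the closure of `α(ℝ)`. -/
theorem irrational_winding_closure_of_int_union_two_pi_int
    (α : ℝ → Circle × Circle) (hα : α = fun v => (Circle.exp v, Circle.exp (2 * π * v)))
    (Ω : Set ℝ) (hΩ : Ω = {x : ℝ | (∃ n : ℤ, x = n) ∨ ∃ n : ℤ, x = 2 * π * n}) :
    closure (α '' Ω) =
        (Set.univ ×ˢ ({1} : Set Circle)) ∪ (({1} : Set Circle) ×ˢ Set.univ) ∧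
      closure (Set.range α) = Set.univ ∧
      ¬ Dense (α '' Ω) := by
  have hΩ' : Ω = range ((↑) : ℤ → ℝ) ∪ range fun n : ℤ => 2 * π * n := by
    ext; simp [hΩ, eq_comm]
  have himage_int : α ∘ ((↑) : ℤ → ℝ) = fun n : ℤ => (Circle.exp (n * 1), 1) := by
    ext n <;> simp [hα, Circle.exp_two_pi_mul_int]
  have himage_two_pi_int :
      (α ∘ fun n : ℤ => 2 * π * n) = fun n : ℤ => (1, Circle.exp (n * (2 * π * (2 * π)))) := by
    funext n
    rw [hα, Function.comp_apply, Circle.exp_two_pi_mul_int]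
    congr 2
    ring
  have hirr₁ : Irrational (1 / (2 * π)) := by
    simpa [one_div] using (irrational_pi.ratCast_mul (q := 2) two_ne_zero).inv
  have hirr₂ : Irrational (2 * π * (2 * π) / (2 * π)) := by
    simpa [two_pi_pos.ne'] using irrational_pi.ratCast_mul (q := 2) two_ne_zero
  have hclosure : closure (α '' Ω) = univ ×ˢ {1} ∪ {1} ×ˢ univ := by
    rw [hΩ', image_union, ← range_comp, ← range_comp, himage_int, himage_two_pi_int, closure_union,
      (Circle.denseRange_exp_intCast_mul hirr₁).closure_range_prodMk_const,
      (Circle.denseRange_exp_intCast_mul hirr₂).closure_range_const_prodMk]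
  refine ⟨hclosure, ?_, fun hdense => ?_⟩
  · refine (denseRange_of_map_add_of_axes_subset_closure (fun x y => ?_) ?_).closure_range
    · simp [hα, mul_add, Circle.exp_add]
    · exact hclosure ▸ closure_mono (image_subset_range α Ω)
  · have hpi : (Circle.exp π, Circle.exp π) ∈ closure (α '' Ω) := hdense.closure_eq ▸ trivial
    rw [hclosure] at hpi
    rcases hpi with ⟨-, hpi⟩ | ⟨hpi, -⟩ <;> exact Circle.exp_pi_ne_one hpi
end

section
/- Let V be a finite-dimensional real vector space and G ⊆ GL(V) a subgroup acting irreducibly on V (the only G-invariant linear subspaces of V are 0 and V). If there exist a nonzero u ∈ V* and a nonzero v ∈ V such that the matrix coefficient g ↦ u(g v) is bounded on G, then the closure of G in GL(V) is compact. Equivalently, if G is not contained in any compact subgroup of GL(V), then every matrix coefficient g ↦ u(g v) with u ≠ 0 and v ≠ 0 is unbounded on G. -/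
/-!
By irreducibility the orbit `G v` spans `V` (its span is invariant and contains `v`), and the
functionals `u ∘ g`, `g ∈ G`, have no common zero other than `0` (their common kernel is invariant
and is not `V`). Hence the functionals `T ↦ u (h (T (g v)))`, `g h ∈ G`, separate the points of
`End V`, and each of them is bounded on `G`, where it takes the values `u ((h * k * g) v)`. In
finite dimension a separating family of functionals spans the dual, so `G` is bounded in `End V`.
Since `G = G⁻¹`, the closure of `G` in `GL(V)` lies in the units of the closure of `G` in `End V`,
which is compact.
-/

open Bornology Set

section Irreducible

variable {R V : Type*} [Ring R] [AddCommGroup V] [Module R V] [TopologicalSpace V]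

def ActsIrreducibly (G : Subgroup (V →L[R] V)ˣ) : Prop :=
  ∀ W : Submodule R V, (∀ g ∈ G, ∀ w ∈ W, (g : V →L[R] V) w ∈ W) → W = ⊥ ∨ W = ⊤

variable {G : Subgroup (V →L[R] V)ˣ}

theorem ActsIrreducibly.span_orbit_eq_top (hG : ActsIrreducibly G) {v : V} (hv : v ≠ 0) :
    Submodule.span R ((fun g : (V →L[R] V)ˣ => (g : V →L[R] V) v) '' G) = ⊤ := by
  set W := Submodule.span R ((fun g : (V →L[R] V)ˣ => (g : V →L[R] V) v) '' G)
  refine (hG W fun g hg w hw => ?_).resolve_left fun hbot => hv ?_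
  · have hmap : W.map (g : V →ₗ[R] V) ≤ W :=
      (Submodule.map_span_le _ _ _).2 fun _ ⟨k, hk, hkv⟩ =>
        Submodule.subset_span ⟨g * k, G.mul_mem hg hk, by simp [← hkv]⟩
    exact hmap ⟨w, hw, rfl⟩
  · have hvW : v ∈ W := Submodule.subset_span ⟨1, G.one_mem, rfl⟩
    simpa [hbot] using hvW

theorem ActsIrreducibly.eq_zero_of_forall_apply_eq_zero (hG : ActsIrreducibly G)
    {u : Module.Dual R V} (hu : u ≠ 0) {x : V} (hx : ∀ g ∈ G, u ((g : V →L[R] V) x) = 0) :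
    x = 0 := by
  let W : Submodule R V := ⨅ g ∈ G, LinearMap.ker (u ∘ₗ (g : V →L[R] V).toLinearMap)
  have hW : W = ⊥ := by
    refine (hG W fun h hh w hw => ?_).resolve_right fun htop => hu ?_
    · simp only [W, Submodule.mem_iInf, LinearMap.mem_ker] at hw ⊢
      intro g hg
      simpa using hw (g * h) (G.mul_mem hg hh)
    · ext y
      have hyW : y ∈ W := htop ▸ Submodule.mem_top
      simp only [W, Submodule.mem_iInf, LinearMap.mem_ker] at hyW
      simpa using hyW 1 G.one_mem
  have hxW : x ∈ W := by simpa [W] using hx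
  simpa [hW] using hxW

theorem ActsIrreducibly.eq_zero_of_forall_matrixCoeff_eq_zero (hG : ActsIrreducibly G)
    {u : Module.Dual R V} (hu : u ≠ 0) {v : V} (hv : v ≠ 0) {T : V →L[R] V}
    (hT : ∀ g ∈ G, ∀ h ∈ G, u ((h : V →L[R] V) (T ((g : V →L[R] V) v))) = 0) : T = 0 := by
  have hT_orbit : ∀ g ∈ G, T ((g : V →L[R] V) v) = 0 := fun g hg =>
    hG.eq_zero_of_forall_apply_eq_zero hu (hT g hg)
  refine ContinuousLinearMap.coe_injective (LinearMap.ext_on (hG.span_orbit_eq_top hv) ?_)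
  rintro _ ⟨g, hg, rfl⟩
  simpa using hT_orbit g hg

end Irreducible

section BoundedFunctionals

variable (𝕜 : Type*) {E : Type*} [NontriviallyNormedField 𝕜] [NormedAddCommGroup E]
  [NormedSpace 𝕜 E]

def boundedFunctionals (A : Set E) : Submodule 𝕜 (Module.Dual 𝕜 E) where
  carrier := {f | IsBounded (f '' A)}
  add_mem' {f g} hf hg := (hf.add hg).subset (image_subset_iff.2 fun x hx =>
    add_mem_add (mem_image_of_mem f hx) (mem_image_of_mem g hx))
  zero_mem' := (isBounded_singleton (x := (0 : 𝕜))).subset (by simp)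
  smul_mem' c f hf := by
    simpa [image_image, ← image_smul] using hf.smul₀ c

variable {𝕜}

theorem isBounded_of_boundedFunctionals_eq_top [CompleteSpace 𝕜] [FiniteDimensional 𝕜 E]
    {A : Set E} (hA : boundedFunctionals 𝕜 A = ⊤) : IsBounded A := by
  let b := Module.finBasis 𝕜 E
  have hcoord : IsBounded (b.equivFunL '' A) := forall_isBounded_image_eval_iff.1 fun i => by
    have hi : IsBounded (b.coord i '' A) :=
      (hA ▸ Submodule.mem_top : b.coord i ∈ boundedFunctionals 𝕜 A)
    simpa [image_image] using hi
  simpa [image_image] using b.equivFunL.symm.lipschitz.isBounded_image hcoord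

theorem isBounded_of_separating [CompleteSpace 𝕜] [FiniteDimensional 𝕜 E] {ι : Type*}
    {ℓ : ι → Module.Dual 𝕜 E} (hℓ : ∀ x, (∀ i, ℓ i x = 0) → x = 0) {A : Set E}
    (hA : ∀ i, IsBounded (ℓ i '' A)) : IsBounded A := by
  have hW : (boundedFunctionals 𝕜 A).dualCoannihilator = ⊥ := by
    refine eq_bot_iff.2 fun x hx => hℓ x fun i => ?_
    exact (Submodule.mem_dualCoannihilator x).1 hx (ℓ i) (hA i)
  refine isBounded_of_boundedFunctionals_eq_top (𝕜 := 𝕜) ?_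
  rw [← Subspace.dualCoannihilator_dualAnnihilator_eq (W := boundedFunctionals 𝕜 A), hW,
    Submodule.dualAnnihilator_bot]

end BoundedFunctionals

theorem Subgroup.isCompact_closure_of_isBounded {R : Type*} [NormedRing R] [ProperSpace R]
    (G : Subgroup Rˣ) (hG : IsBounded (((↑) : Rˣ → R) '' G)) :
    IsCompact (_root_.closure (G : Set Rˣ)) := by
  let S := (G.toSubmonoid.map (Units.coeHom R)).topologicalClosure
  have hS : IsCompact (S : Set R) := by
    refine Metric.isCompact_of_isClosed_isBounded (Submonoid.isClosed_topologicalClosure _) ?_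
    rw [Submonoid.coe_topologicalClosure]
    exact hG.closure
  refine (Submonoid.units_isCompact hS).of_isClosed_subset isClosed_closure
    (closure_minimal (fun g hg => ?_) (Submonoid.units_isCompact hS).isClosed)
  exact S.mem_units_of_val_mem_inv_val_mem (Submonoid.le_topologicalClosure _ ⟨g, hg, rfl⟩)
    (Submonoid.le_topologicalClosure _ ⟨g⁻¹, G.inv_mem hg, rfl⟩)

/-- If a subgroup `G ⊆ GL(V)` acts irreducibly on a finite-dimensional real vector space
`V` and some matrix coefficient `g ↦ u(g v)` with `u ≠ 0`, `v ≠ 0` is bounded on `G`,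
then the closure of `G` in `GL(V)` is compact. -/
theorem closure_isCompact_of_bounded_matrix_coefficient
    {V : Type*} [NormedAddCommGroup V] [NormedSpace ℝ V] [FiniteDimensional ℝ V]
    (G : Subgroup (V →L[ℝ] V)ˣ)
    (hirr : ∀ W : Submodule ℝ V, (∀ g ∈ G, ∀ w ∈ W, (g : V →L[ℝ] V) w ∈ W) →
      W = ⊥ ∨ W = ⊤)
    (u : Module.Dual ℝ V) (hu : u ≠ 0) (v : V) (hv : v ≠ 0)
    (hbdd : ∃ C : ℝ, ∀ g ∈ G, |u ((g : V →L[ℝ] V) v)| ≤ C) :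
    IsCompact (closure (G : Set (V →L[ℝ] V)ˣ)) := by
  obtain ⟨C, hC⟩ := hbdd
  let ℓ : G × G → Module.Dual ℝ (V →L[ℝ] V) := fun p =>
    u ∘ₗ ((p.1 : (V →L[ℝ] V)ˣ) : V →L[ℝ] V).toLinearMap ∘ₗ
      (ContinuousLinearMap.apply ℝ V (((p.2 : (V →L[ℝ] V)ˣ) : V →L[ℝ] V) v)).toLinearMap
  have hℓ_sep : ∀ T, (∀ p, ℓ p T = 0) → T = 0 := fun T hT =>
    ActsIrreducibly.eq_zero_of_forall_matrixCoeff_eq_zero hirr hu hv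
      fun g hg h hh => by simpa [ℓ] using hT (⟨h, hh⟩, ⟨g, hg⟩)
  have hℓ_bdd : ∀ p, IsBounded (ℓ p '' ((↑) '' (G : Set (V →L[ℝ] V)ˣ))) := by
    rintro ⟨⟨h, hh⟩, ⟨g, hg⟩⟩
    refine isBounded_iff_forall_norm_le.2 ⟨C, ?_⟩
    rintro _ ⟨_, ⟨k, hk, rfl⟩, rfl⟩
    simpa [ℓ] using hC (h * k * g) (G.mul_mem (G.mul_mem hh hk) hg)
  exact G.isCompact_closure_of_isBounded (isBounded_of_separating hℓ_sep hℓ_bdd)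
end

section
/- Let S ⊂ ℝ be a finite set, c : S → ℝ, and F(t) = Σ_{λ ∈ S} c(λ) · exp(λ t). Suppose the set {λ ∈ S : c(λ) ≠ 0} is nonempty and its maximum λ₀ satisfies λ₀ > 0. Then the Cesàro averages of the oscillatory exponential tend to zero: (1/T) ∫₀^T exp(i·F(t)) dt → 0 as T → ∞. -/
/-!
Write `F = Σ c(λ) e^{λt}`. Beyond some `A` the derivatives `F'` and `F''`, themselves exponential
polynomials with leading term `λ₀ c(λ₀) e^{λ₀ t}` resp. `λ₀² c(λ₀) e^{λ₀ t}`, satisfy `|F'| ≥ 1` and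
`F''` has constant sign. Van der Corput's first-derivative test, i.e. integration by parts against
`e^{iF} / (i F')`, then bounds `‖∫_A^T e^{iF}‖ ≤ 4` uniformly in `T`, so the averages are `O(1/T)`.
-/

open Filter intervalIntegral Set Topology

noncomputable def expPoly (S : Finset ℝ) (c : ℝ → ℝ) (t : ℝ) : ℝ := ∑ l ∈ S, c l * Real.exp (l * t)

namespace expPoly

variable {S : Finset ℝ} {c : ℝ → ℝ} {l₀ : ℝ}

lemma hasDerivAt (t : ℝ) : HasDerivAt (expPoly S c) (expPoly S (fun l => l * c l) t) t := by
  unfold expPoly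
  refine HasDerivAt.fun_sum fun l _ => ?_
  have := ((hasDerivAt_id' t).const_mul l).exp.const_mul (c l)
  rw [mul_one] at this
  exact this.congr_deriv (by ring)

@[fun_prop]
lemma continuous : Continuous (expPoly S c) := by
  unfold expPoly; fun_prop

lemma tendsto_mul_exp_neg (hl₀ : l₀ ∈ S) (hmax : ∀ l ∈ S, c l ≠ 0 → l ≤ l₀) :
    Tendsto (fun t => expPoly S c t * Real.exp (-(l₀ * t))) atTop (𝓝 (c l₀)) := by
  have hterm : ∀ l ∈ S, Tendsto (fun t => c l * Real.exp ((l - l₀) * t)) atTop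
      (𝓝 (if l = l₀ then c l₀ else 0)) := fun l hl => by
    split_ifs with hll
    · simp [hll]
    by_cases hcl : c l = 0
    · simp [hcl]
    have hlt : l - l₀ < 0 := sub_neg.2 ((hmax l hl hcl).lt_of_ne hll)
    simpa using (Real.tendsto_exp_atBot.comp
      (tendsto_id.const_mul_atTop_of_neg hlt)).const_mul (c l)
  convert tendsto_finsetSum S hterm using 1
  · ext t
    simp only [expPoly, Finset.sum_mul, mul_assoc, ← Real.exp_add]
    congr! 3
    ring
  · simp [hl₀]

lemma coeff_mul_ne_zero (hmax : ∀ l ∈ S, c l ≠ 0 → l ≤ l₀) :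
    ∀ l ∈ S, l * c l ≠ 0 → l ≤ l₀ :=
  fun l hl h => hmax l hl (right_ne_zero_of_mul h)

lemma eventually_pos_mul (hl₀ : l₀ ∈ S) (hc : c l₀ ≠ 0) (hmax : ∀ l ∈ S, c l ≠ 0 → l ≤ l₀) :
    ∀ᶠ t in atTop, 0 < c l₀ * expPoly S c t := by
  filter_upwards [((tendsto_mul_exp_neg hl₀ hmax).const_mul (c l₀)).eventually
    (eventually_gt_nhds (mul_self_pos.2 hc))] with t ht
  rw [← mul_assoc] at ht
  exact pos_of_mul_pos_left ht (Real.exp_pos _).le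

lemma tendsto_abs_atTop (hl₀ : l₀ ∈ S) (hc : c l₀ ≠ 0) (hmax : ∀ l ∈ S, c l ≠ 0 → l ≤ l₀)
    (hpos : 0 < l₀) : Tendsto (fun t => |expPoly S c t|) atTop atTop := by
  have hexp : Tendsto (fun t => Real.exp (l₀ * t)) atTop atTop :=
    Real.tendsto_exp_atTop.comp (tendsto_id.const_mul_atTop hpos)
  refine ((tendsto_mul_exp_neg hl₀ hmax).abs.pos_mul_atTop (abs_pos.2 hc) hexp).congr fun t => ?_
  rw [abs_mul, abs_of_pos (Real.exp_pos _), mul_assoc, ← Real.exp_add, neg_add_cancel,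
    Real.exp_zero, mul_one]

end expPoly

lemma tendsto_one_div_mul_integral_of_norm_integral_le {f : ℝ → ℂ} (hf : Continuous f)
    {A C : ℝ} (h : ∀ T ≥ A, ‖∫ t in A..T, f t‖ ≤ C) :
    Tendsto (fun T : ℝ => 1 / (T : ℂ) * ∫ t in (0 : ℝ)..T, f t) atTop (𝓝 0) := by
  set B := ‖∫ t in (0 : ℝ)..A, f t‖ + C
  refine squeeze_zero_norm' ?_ (tendsto_const_nhds.div_atTop tendsto_id : Tendsto (B / ·) _ _)
  filter_upwards [eventually_ge_atTop A, eventually_gt_atTop 0] with T hTA hT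
  rw [norm_mul, norm_div, norm_one, Complex.norm_real, Real.norm_of_nonneg hT.le,
    one_div_mul_eq_div,
    ← integral_add_adjacent_intervals (hf.intervalIntegrable 0 A) (hf.intervalIntegrable A T)]
  gcongr
  exact (norm_add_le _ _).trans (add_le_add_right (h T hTA) _)

section VanDerCorput

variable {f f' f'' : ℝ → ℝ} {a b m : ℝ}

lemma integral_abs_div_sq_le_of_nonneg (hab : a ≤ b)
    (hf' : ∀ t ∈ Icc a b, HasDerivAt f' (f'' t) t) (hf'' : ContinuousOn f'' (Icc a b))
    (hm : 0 < m) (hf'm : ∀ t ∈ Icc a b, m ≤ |f' t|) (hnonneg : ∀ t ∈ Icc a b, 0 ≤ f'' t) :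
    ∫ t in a..b, |f'' t| / f' t ^ 2 ≤ 2 / m := by
  rw [← uIcc_of_le hab] at hf' hf'' hf'm hnonneg
  have hne : ∀ t ∈ uIcc a b, f' t ≠ 0 := fun t ht => abs_pos.1 (hm.trans_le (hf'm t ht))
  have hinv_le : ∀ t ∈ uIcc a b, |(f' t)⁻¹| ≤ m⁻¹ := fun t ht => by
    rw [abs_inv]; exact inv_anti₀ hm (hf'm t ht)
  have hderiv : ∀ t ∈ uIcc a b, HasDerivAt (fun t => -(f' t)⁻¹) (f'' t / f' t ^ 2) t :=
    fun t ht => ((hf' t ht).inv (hne t ht)).neg.congr_deriv (by ring)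
  have hcont : ContinuousOn (fun t => f'' t / f' t ^ 2) (uIcc a b) :=
    hf''.div (ContinuousOn.pow (fun t ht => (hf' t ht).continuousAt.continuousWithinAt) 2)
      fun t ht => pow_ne_zero 2 (hne t ht)
  calc ∫ t in a..b, |f'' t| / f' t ^ 2 = ∫ t in a..b, f'' t / f' t ^ 2 :=
        integral_congr fun t ht => by rw [abs_of_nonneg (hnonneg t ht)]
    _ = (f' a)⁻¹ - (f' b)⁻¹ := by
        rw [integral_eq_sub_of_hasDerivAt hderiv hcont.intervalIntegrable]; ring
    _ ≤ m⁻¹ + m⁻¹ := by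
        have := hinv_le a left_mem_uIcc; have := hinv_le b right_mem_uIcc
        linarith [le_abs_self (f' a)⁻¹, neg_abs_le (f' b)⁻¹]
    _ = 2 / m := by ring

lemma integral_abs_div_sq_le (hab : a ≤ b)
    (hf' : ∀ t ∈ Icc a b, HasDerivAt f' (f'' t) t) (hf'' : ContinuousOn f'' (Icc a b))
    (hm : 0 < m) (hf'm : ∀ t ∈ Icc a b, m ≤ |f' t|)
    (hsign : (∀ t ∈ Icc a b, 0 ≤ f'' t) ∨ ∀ t ∈ Icc a b, f'' t ≤ 0) :
    ∫ t in a..b, |f'' t| / f' t ^ 2 ≤ 2 / m := by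
  rcases hsign with hnonneg | hnonpos
  · exact integral_abs_div_sq_le_of_nonneg hab hf' hf'' hm hf'm hnonneg
  · simpa using integral_abs_div_sq_le_of_nonneg (f' := -f') (f'' := -f'') hab
      (fun t ht => (hf' t ht).neg) hf''.neg hm (by simpa using hf'm)
      fun t ht => neg_nonneg.2 (hnonpos t ht)

lemma hasDerivAt_cexp_I_mul_div {t : ℝ} (hf : HasDerivAt f (f' t) t)
    (hf' : HasDerivAt f' (f'' t) t) (hne : f' t ≠ 0) :
    HasDerivAt (fun t => Complex.exp (Complex.I * f t) / (Complex.I * f' t))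
      (Complex.exp (Complex.I * f t) +
        Complex.I * Complex.exp (Complex.I * f t) * f'' t / f' t ^ 2) t := by
  have hne' : (f' t : ℂ) ≠ 0 := Complex.ofReal_ne_zero.2 hne
  refine ((hf.ofReal_comp.const_mul Complex.I).cexp.div (hf'.ofReal_comp.const_mul Complex.I)
    (mul_ne_zero Complex.I_ne_zero hne')).congr_deriv ?_
  field_simp
  ring_nf
  rw [Complex.I_sq]
  ring

theorem norm_integral_cexp_I_mul_le (hab : a ≤ b)
    (hf : ∀ t ∈ Icc a b, HasDerivAt f (f' t) t)
    (hf' : ∀ t ∈ Icc a b, HasDerivAt f' (f'' t) t) (hf'' : ContinuousOn f'' (Icc a b))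
    (hm : 0 < m) (hf'm : ∀ t ∈ Icc a b, m ≤ |f' t|)
    (hsign : (∀ t ∈ Icc a b, 0 ≤ f'' t) ∨ ∀ t ∈ Icc a b, f'' t ≤ 0) :
    ‖∫ t in a..b, Complex.exp (Complex.I * f t)‖ ≤ 4 / m := by
  set H : ℝ → ℂ := fun t => Complex.exp (Complex.I * f t) / (Complex.I * f' t)
  set g : ℝ → ℂ := fun t => Complex.I * Complex.exp (Complex.I * f t) * f'' t / f' t ^ 2
  have hne : ∀ t ∈ Icc a b, f' t ≠ 0 := fun t ht => abs_pos.1 (hm.trans_le (hf'm t ht))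
  have hfc : ContinuousOn f (Icc a b) := fun t ht => (hf t ht).continuousAt.continuousWithinAt
  have hf'c : ContinuousOn f' (Icc a b) := fun t ht => (hf' t ht).continuousAt.continuousWithinAt
  have hint :
      IntervalIntegrable (fun t => Complex.exp (Complex.I * f t)) MeasureTheory.volume a b :=
    ContinuousOn.intervalIntegrable (by rw [uIcc_of_le hab]; fun_prop)
  have hgc : ContinuousOn g (Icc a b) := by
    refine ContinuousOn.div (by fun_prop) (by fun_prop) fun t ht => ?_
    exact pow_ne_zero 2 (Complex.ofReal_ne_zero.2 (hne t ht))
  have hgint : IntervalIntegrable g MeasureTheory.volume a b :=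
    (uIcc_of_le hab ▸ hgc).intervalIntegrable
  have hparts : ∫ t in a..b, Complex.exp (Complex.I * f t) = H b - H a - ∫ t in a..b, g t := by
    rw [eq_sub_iff_add_eq, ← integral_add hint hgint]
    refine integral_eq_sub_of_hasDerivAt (fun t ht => ?_) (hint.add hgint)
    rw [uIcc_of_le hab] at ht
    exact hasDerivAt_cexp_I_mul_div (hf t ht) (hf' t ht) (hne t ht)
  have hH : ∀ t ∈ Icc a b, ‖H t‖ ≤ 1 / m := fun t ht => by
    simp only [H, norm_div, norm_mul, Complex.norm_exp_I_mul_ofReal, Complex.norm_I,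
      Complex.norm_real, Real.norm_eq_abs, one_mul]
    exact one_div_le_one_div_of_le hm (hf'm t ht)
  have hg : ‖∫ t in a..b, g t‖ ≤ 2 / m := calc
    ‖∫ t in a..b, g t‖ ≤ ∫ t in a..b, ‖g t‖ := norm_integral_le_integral_norm hab
    _ = ∫ t in a..b, |f'' t| / f' t ^ 2 := integral_congr fun t _ => by
        simp [g, Complex.norm_exp_I_mul_ofReal]
    _ ≤ 2 / m := integral_abs_div_sq_le hab hf' hf'' hm hf'm hsign
  calc ‖∫ t in a..b, Complex.exp (Complex.I * f t)‖
      ≤ ‖H b‖ + ‖H a‖ + ‖∫ t in a..b, g t‖ := by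
        rw [hparts]; exact (norm_sub_le _ _).trans (add_le_add_left (norm_sub_le _ _) _)
    _ ≤ 1 / m + 1 / m + 2 / m := by
        gcongr
        exacts [hH b (right_mem_Icc.2 hab), hH a (left_mem_Icc.2 hab)]
    _ = 4 / m := by ring

end VanDerCorput

/-- If `F(t) = Σ_{λ ∈ S} c(λ) e^{λ t}` is a real exponential polynomial whose largest
exponent `λ₀` with nonzero coefficient is positive, then the Cesàro averages
`(1/T) ∫₀^T e^{i F(t)} dt` tend to `0` as `T → ∞`. -/
theorem exponential_polynomial_oscillatory_average_tendsto_zero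
    (S : Finset ℝ) (c : ℝ → ℝ) (F : ℝ → ℝ)
    (hF : F = fun t => ∑ l ∈ S, c l * Real.exp (l * t))
    (l₀ : ℝ) (hl₀S : l₀ ∈ S) (hl₀c : c l₀ ≠ 0)
    (hmax : ∀ l ∈ S, c l ≠ 0 → l ≤ l₀) (hl₀pos : 0 < l₀) :
    Tendsto (fun T : ℝ => (1 / (T : ℂ)) * ∫ t in (0:ℝ)..T, Complex.exp (Complex.I * (F t : ℂ)))
      atTop (nhds 0) := by
  obtain rfl : F = expPoly S c := hF
  set c₁ := fun l => l * c l
  set c₂ := fun l => l * c₁ l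
  have hmax₁ := expPoly.coeff_mul_ne_zero hmax
  have hmax₂ := expPoly.coeff_mul_ne_zero hmax₁
  have hc₁ : c₁ l₀ ≠ 0 := mul_ne_zero hl₀pos.ne' hl₀c
  have hc₂ : c₂ l₀ ≠ 0 := mul_ne_zero hl₀pos.ne' hc₁
  obtain ⟨A, hA⟩ := eventually_atTop.1
    (((expPoly.tendsto_abs_atTop hl₀S hc₁ hmax₁ hl₀pos).eventually_ge_atTop 1).and
      (expPoly.eventually_pos_mul hl₀S hc₂ hmax₂))
  have hsign : (∀ t ≥ A, 0 ≤ expPoly S c₂ t) ∨ ∀ t ≥ A, expPoly S c₂ t ≤ 0 := by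
    rcases hc₂.lt_or_gt with hneg | hpos
    · exact Or.inr fun t ht => (neg_of_mul_pos_right (hA t ht).2 hneg.le).le
    · exact Or.inl fun t ht => (pos_of_mul_pos_right (hA t ht).2 hpos.le).le
  refine tendsto_one_div_mul_integral_of_norm_integral_le (by fun_prop) (A := A) (C := 4)
    fun T hT => ?_
  simpa using norm_integral_cexp_I_mul_le hT (fun t _ => expPoly.hasDerivAt t)
    (fun t _ => expPoly.hasDerivAt t) expPoly.continuous.continuousOn one_pos
    (fun t ht => (hA t ht.1).1) (hsign.imp (fun h t ht => h t ht.1) fun h t ht => h t ht.1)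
end

section
/- Let x, y be real numbers with x·y ≠ 0. Then the image of the hyperbola orbit {(e^t·x, e^{−t}·y) : t ∈ ℝ} ⊆ ℝ² under the quotient homomorphism ℝ² → ℝ²/ℤ² is not dense in the torus ℝ²/ℤ². -/
/-!
The orbit lies on the hyperbola `u v = c` with `c = x y ≠ 0`, so it suffices that the
`ℤ²`-translates of this hyperbola do not cover a dense subset of `ℝ²`. Near the centre of
the unit square both factors `u + n`, `v + m` stay at least `1/4` away from `0`, so
`|u + n|, |v + m| ≤ 4 |c|` and only finitely many translates meet the square. Each translate
meets a vertical line in at most one point, so some point of that line inside the square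
lies off their (closed) union, and a whole neighbourhood of it misses every translate.
-/

open Set

def hyperbolaShift (c : ℝ) (k : ℤ × ℤ) : Set (ℝ × ℝ) :=
  {p | (p.1 + k.1) * (p.2 + k.2) = c}

theorem isClosed_hyperbolaShift (c : ℝ) (k : ℤ × ℤ) : IsClosed (hyperbolaShift c k) :=
  isClosed_eq (by fun_prop) continuous_const

theorem subsingleton_setOf_mk_mem_hyperbolaShift {c : ℝ} (hc : c ≠ 0) (k : ℤ × ℤ) (u : ℝ) :
    {v | (u, v) ∈ hyperbolaShift c k}.Subsingleton := by
  intro v hv w hw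
  have hu : u + k.1 ≠ 0 := by
    rintro h0
    simp only [hyperbolaShift, mem_ofPred_eq, h0, zero_mul] at hv
    exact hc hv.symm
  have := mul_left_cancel₀ hu (hv.trans hw.symm)
  linarith

theorem one_quarter_le_abs_add_intCast {x : ℝ} (hx : x ∈ Ioo (1/4 : ℝ) (3/4)) (n : ℤ) :
    1/4 ≤ |x + n| := by
  obtain ⟨hx₁, hx₂⟩ := hx
  rcases le_or_gt 0 n with hn | hn
  · have : (0 : ℝ) ≤ n := by exact_mod_cast hn
    exact le_abs.mpr (Or.inl (by linarith))
  · have : (n : ℝ) ≤ -1 := by exact_mod_cast Int.le_sub_one_of_lt hn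
    exact le_abs.mpr (Or.inr (by linarith))

theorem abs_intCast_lt_of_mul_eq {x y c : ℝ} (hx : x ∈ Ioo (1/4 : ℝ) (3/4))
    (hy : y ∈ Ioo (1/4 : ℝ) (3/4)) {n m : ℤ} (h : (x + n) * (y + m) = c) :
    |(n : ℝ)| < 4 * |c| + 1 := by
  have hxn := one_quarter_le_abs_add_intCast hx n
  have hym := one_quarter_le_abs_add_intCast hy m
  have hxn_le : |x + n| ≤ 4 * |c| := by
    have : |x + n| * (1/4) ≤ |x + n| * |y + m| :=
      mul_le_mul_of_nonneg_left hym (abs_nonneg _)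
    rw [← abs_mul, h] at this
    linarith
  have hx_lt : |x| < 1 := abs_lt.mpr ⟨by linarith [hx.1], by linarith [hx.2]⟩
  calc |(n : ℝ)| = |(x + n) - x| := by ring_nf
    _ ≤ |x + n| + |x| := abs_sub _ _
    _ < 4 * |c| + 1 := by linarith

theorem finite_setOf_hyperbolaShift_inter_nonempty (c : ℝ) :
    {k : ℤ × ℤ |
      (hyperbolaShift c k ∩ Ioo (1/4 : ℝ) (3/4) ×ˢ Ioo (1/4 : ℝ) (3/4)).Nonempty}.Finite := by
  set N : ℤ := ⌈4 * |c| + 1⌉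
  refine ((finite_Icc (-N) N).prod (finite_Icc (-N) N)).subset ?_
  rintro ⟨n, m⟩ ⟨⟨x, y⟩, hxy, hx, hy⟩
  have bound : ∀ {k : ℤ}, |(k : ℝ)| < 4 * |c| + 1 → k ∈ Icc (-N) N := fun {k} hk => by
    have hN := Int.le_ceil (4 * |c| + 1)
    have : ((|k| : ℤ) : ℝ) ≤ N := by push_cast; linarith
    exact abs_le.mp (by exact_mod_cast this)
  exact ⟨bound (abs_intCast_lt_of_mul_eq hx hy hxy),
    bound (abs_intCast_lt_of_mul_eq hy hx ((mul_comm _ _).trans hxy))⟩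

theorem not_dense_iUnion_hyperbolaShift {c : ℝ} (hc : c ≠ 0) :
    ¬ Dense (⋃ k, hyperbolaShift c k) := by
  intro hd
  set I := Ioo (1/4 : ℝ) (3/4)
  set S := {k : ℤ × ℤ | (hyperbolaShift c k ∩ I ×ˢ I).Nonempty}
  have hS : S.Finite := finite_setOf_hyperbolaShift_inter_nonempty c
  set F := ⋃ k ∈ S, hyperbolaShift c k
  have hF : IsClosed F := hS.isClosed_biUnion fun k _ => isClosed_hyperbolaShift c k
  have hslice : {v | ((1/2 : ℝ), v) ∈ F}.Finite := by
    simp only [F, mem_iUnion₂, ofPred_exists]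
    exact hS.biUnion fun k _ => (subsingleton_setOf_mk_mem_hyperbolaShift hc k _).finite
  obtain ⟨v, hvI, hvF⟩ := ((Ioo_infinite (by norm_num : (1/4 : ℝ) < 3/4)).sdiff hslice).nonempty
  have hopen : IsOpen (I ×ˢ I \ F) := (isOpen_Ioo.prod isOpen_Ioo).sdiff hF
  obtain ⟨q, ⟨hqI, hqF⟩, hq⟩ :=
    hd.inter_open_nonempty _ hopen ⟨(1/2, v), ⟨⟨by norm_num, by norm_num⟩, hvI⟩, hvF⟩
  obtain ⟨k, hk⟩ := mem_iUnion.mp hq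
  exact hqF (mem_biUnion (show k ∈ S from ⟨q, hk, hqI⟩) hk)

theorem preimage_image_coe_hyperbola_subset (c : ℝ) :
    (fun p : ℝ × ℝ => ((p.1 : AddCircle (1 : ℝ)), (p.2 : AddCircle (1 : ℝ)))) ⁻¹'
        ((fun p : ℝ × ℝ => ((p.1 : AddCircle (1 : ℝ)), (p.2 : AddCircle (1 : ℝ)))) ''
          {p | p.1 * p.2 = c}) ⊆ ⋃ k, hyperbolaShift c k := by
  have coe_eq : ∀ {a b : ℝ}, (a : AddCircle (1 : ℝ)) = b → ∃ n : ℤ, a = b + n := fun {a b} h => by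
    obtain ⟨n, hn⟩ := (AddCircle.coe_eq_zero_iff (1 : ℝ)).mp
      (show ((a - b : ℝ) : AddCircle (1 : ℝ)) = 0 by rw [AddCircle.coe_sub, h, sub_self])
    exact ⟨n, by rw [zsmul_one] at hn; linarith⟩
  rintro ⟨u, v⟩ ⟨⟨a, b⟩, hab, heq⟩
  obtain ⟨n, rfl⟩ := coe_eq (congrArg Prod.fst heq)
  obtain ⟨m, rfl⟩ := coe_eq (congrArg Prod.snd heq)
  exact mem_iUnion.mpr ⟨(n, m), hab⟩

/-- The image of the hyperbola orbit `{(e^t x, e^{-t} y) : t ∈ ℝ}` (with `x y ≠ 0`) under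
the quotient map `ℝ² → ℝ²/ℤ²` is not dense in the 2-torus. -/
theorem hyperbola_orbit_not_dense_in_torus
    (x y : ℝ) (h : x * y ≠ 0) :
    ¬ Dense ((fun p : ℝ × ℝ => ((p.1 : AddCircle (1:ℝ)), (p.2 : AddCircle (1:ℝ)))) ''
      {p : ℝ × ℝ | ∃ t : ℝ, p = (Real.exp t * x, Real.exp (-t) * y)}) := by
  intro hd
  have orbit_subset : {p : ℝ × ℝ | ∃ t : ℝ, p = (Real.exp t * x, Real.exp (-t) * y)} ⊆
      {p | p.1 * p.2 = x * y} := by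
    rintro _ ⟨t, rfl⟩
    calc Real.exp t * x * (Real.exp (-t) * y) = Real.exp (t + -t) * (x * y) := by
          rw [Real.exp_add]; ring
      _ = x * y := by simp
  have hopen : IsOpenMap
      (fun p : ℝ × ℝ => ((p.1 : AddCircle (1 : ℝ)), (p.2 : AddCircle (1 : ℝ)))) :=
    QuotientAddGroup.isOpenMap_coe.prodMap QuotientAddGroup.isOpenMap_coe
  exact not_dense_iUnion_hyperbolaShift h
    (((hd.mono (image_mono orbit_subset)).preimage hopen).mono
      (preimage_image_coe_hyperbola_subset (x * y)))
end
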